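/- Let ρ and ρ' be two n-qubit quantum states with cumulative distribution functions F_ρ and F_{ρ'}. Then for every ε ≥ 0: F_{ρ'}(ε) ≤ F_ρ(2ε) + 4·‖ρ − ρ'‖₁ / (trace ρ'²). -/

import Mathlib

open Matrix Kronecker
open scoped ComplexOrder

noncomputable def pauli1 : Fin 4 → Matrix (Fin 2) (Fin 2) ℂ
  | 0 => !![1, 0; 0, 1]
  | 1 => !![0, 1; 1, 0]
  | 2 => !![0, -Complex.I; Complex.I, 0]
  | 3 => !![1, 0; 0, -1]

noncomputable def PauliOp {n : ℕ} (a : Fin n → Fin 4) :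
    Matrix (Fin n → Fin 2) (Fin n → Fin 2) ℂ :=
  Matrix.of fun z z' => ∏ i, pauli1 (a i) (z i) (z' i)

/-- The trace norm of a matrix: the trace of the positive semidefinite square root of `Aᴴ * A`. -/
noncomputable def traceNorm {m : Type*} [Fintype m] [DecidableEq m]
    (A : Matrix m m ℂ) : ℝ :=
  ((Matrix.posSemidef_conjTranspose_mul_self A).1.cfc Real.sqrt).trace.re

/-- A quantum state: positive semidefinite with unit trace. -/
structure IsState {m : Type*} [Fintype m] (ρ : Matrix m m ℂ) : Prop where
  posSemidef : ρ.PosSemidef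
  trace_one : ρ.trace = 1

/-- Pauli expectation value `⟨P_a⟩_ρ`. -/
noncomputable def pExp {n : ℕ} (ρ : Matrix (Fin n → Fin 2) (Fin n → Fin 2) ℂ)
    (a : Fin n → Fin 4) : ℝ := ((PauliOp a * ρ).trace).re

/-- The purity `tr ρ²`. -/
noncomputable def purity {m : Type*} [Fintype m] (ρ : Matrix m m ℂ) : ℝ :=
  ((ρ * ρ).trace).re

/-- The Pauli distribution `p_ρ`. -/
noncomputable def pDist {n : ℕ} (ρ : Matrix (Fin n → Fin 2) (Fin n → Fin 2) ℂ)
    (a : Fin n → Fin 4) : ℝ := (pExp ρ a) ^ 2 / (2 ^ n * purity ρ)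

/-- The cumulative distribution function `F_ρ`. -/
noncomputable def cdf {n : ℕ} (ρ : Matrix (Fin n → Fin 2) (Fin n → Fin 2) ℂ)
    (ε : ℝ) : ℝ := ∑ a : Fin n → Fin 4, if (pExp ρ a) ^ 2 ≤ ε then pDist ρ a else 0

/-- The maximally entangled state `|Φ₀⟩`. -/
noncomputable def Phi0 (n : ℕ) : (Fin n → Fin 2) × (Fin n → Fin 2) → ℂ :=
  fun p => if p.1 = p.2 then (↑(Real.sqrt (2 ^ n)))⁻¹ else 0

/-- The Bell state `|Φ_a⟩ = (1 ⊗ P_a)|Φ₀⟩`. -/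
noncomputable def BellVec {n : ℕ} (a : Fin n → Fin 4) :
    (Fin n → Fin 2) × (Fin n → Fin 2) → ℂ :=
  ((1 : Matrix (Fin n → Fin 2) (Fin n → Fin 2) ℂ) ⊗ₖ PauliOp a).mulVec (Phi0 n)

/-- The Bell distribution `q_ρ(a) = ⟨Φ_a| ρ ⊗ ρ |Φ_a⟩`. -/
noncomputable def qDist {n : ℕ} (ρ : Matrix (Fin n → Fin 2) (Fin n → Fin 2) ℂ)
    (a : Fin n → Fin 4) : ℝ :=
  (star (BellVec a) ⬝ᵥ ((ρ ⊗ₖ ρ).mulVec (BellVec a))).re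

/-- The W state. -/
noncomputable def Wstate (n : ℕ) : (Fin n → Fin 2) → ℂ :=
  fun z => if (∑ i, (z i : ℕ)) = 1 then (↑(Real.sqrt n))⁻¹ else 0

/-- The W state projector `|W_n⟩⟨W_n|`. -/
noncomputable def Wproj (n : ℕ) : Matrix (Fin n → Fin 2) (Fin n → Fin 2) ℂ :=
  Matrix.vecMulVec (Wstate n) (star (Wstate n))

/-!
Write `x a = ⟨P_a⟩_ρ'` and `y a = ⟨P_a⟩_ρ`. Pauli completeness, `∑ a, tr(P_a M) • P_a = 2ⁿ • M`,
gives `∑ a, x a ^ 2 = 2ⁿ tr ρ'²`, so both cumulative distribution functions are threshold sums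
of squares over their totals. An index with `x a ^ 2 ≤ ε` but `y a ^ 2 > 2ε` has
`x a ^ 2 ≤ y a ^ 2 - x a ^ 2`, so both the moved mass and the change of the total are bounded
by `D = ∑ a, |y a ^ 2 - x a ^ 2|`. By Cauchy–Schwarz and completeness again,
`D ≤ 2ⁿ ‖ρ - ρ'‖_F ‖ρ + ρ'‖_F ≤ 2ⁿ · 2‖ρ - ρ'‖₁`, since the Frobenius norm is bounded by the
trace norm, and by the trace for positive semidefinite matrices.
-/

open scoped Matrix.Norms.Frobenius

lemma ite_le_ite_add_abs_sub {u v ε : ℝ} (hu : 0 ≤ u) :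
    (if u ≤ ε then u else 0) ≤ (if v ≤ 2 * ε then v else 0) + |v - u| := by
  split_ifs <;> cases abs_cases (v - u) <;> linarith

lemma sum_abs_sq_sub_sq_le {ι : Type*} (s : Finset ι) (x y : ι → ℝ) :
    ∑ i ∈ s, |x i ^ 2 - y i ^ 2| ≤ √(∑ i ∈ s, (x i - y i) ^ 2) * √(∑ i ∈ s, (x i + y i) ^ 2) := by
  have hfactor : ∀ i, |x i ^ 2 - y i ^ 2| = |x i - y i| * |x i + y i| := fun i => by
    rw [← abs_mul]; ring_nf
  simpa only [hfactor, sq_abs] using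
    Real.sum_mul_le_sqrt_mul_sqrt s (fun i => |x i - y i|) (fun i => |x i + y i|)

lemma div_le_div_add_two_mul_div {S₁ S₂ D T T' : ℝ} (hT : 0 < T) (hT' : 0 < T')
    (hS₂ : 0 ≤ S₂) (hS₂T : S₂ ≤ T) (hD : 0 ≤ D) (hS : S₁ ≤ S₂ + D) (hTT' : T - T' ≤ D) :
    S₁ / T' ≤ S₂ / T + 2 * D / T' := by
  have hshift : S₂ * (T - T') ≤ T * D := by
    rcases le_total T' T with h | h
    · calc S₂ * (T - T') ≤ T * (T - T') := mul_le_mul_of_nonneg_right hS₂T (sub_nonneg.2 h)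
        _ ≤ T * D := mul_le_mul_of_nonneg_left hTT' hT.le
    · nlinarith
  rw [div_add_div _ _ hT.ne' hT'.ne', div_le_div_iff₀ hT' (mul_pos hT hT')]
  nlinarith [mul_le_mul_of_nonneg_right hS (mul_pos hT hT').le,
    mul_le_mul_of_nonneg_right hshift hT'.le]

lemma sum_ite_sq_div_le {ι : Type*} [Fintype ι] (x y : ι → ℝ) (ε : ℝ)
    (hx : 0 < ∑ i, x i ^ 2) (hy : 0 < ∑ i, y i ^ 2) :
    (∑ i, if x i ^ 2 ≤ ε then x i ^ 2 else 0) / ∑ i, x i ^ 2 ≤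
      (∑ i, if y i ^ 2 ≤ 2 * ε then y i ^ 2 else 0) / ∑ i, y i ^ 2 +
        2 * (∑ i, |y i ^ 2 - x i ^ 2|) / ∑ i, x i ^ 2 := by
  refine div_le_div_add_two_mul_div hy hx ?_ ?_ ?_ ?_ ?_
  · exact Finset.sum_nonneg fun i _ => by positivity
  · exact Finset.sum_le_sum fun i _ => by split_ifs; exacts [le_rfl, sq_nonneg _]
  · exact Finset.sum_nonneg fun i _ => abs_nonneg _
  · rw [← Finset.sum_add_distrib]
    exact Finset.sum_le_sum fun i _ => ite_le_ite_add_abs_sub (sq_nonneg _)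
  · rw [← Finset.sum_sub_distrib]
    exact Finset.sum_le_sum fun i _ => le_abs_self _

namespace Matrix

lemma frobenius_norm_sq_eq_re_trace_conjTranspose_mul_self {m : Type*} [Fintype m]
    (A : Matrix m m ℂ) : ‖A‖ ^ 2 = (Aᴴ * A).trace.re := by
  rw [frobenius_norm_def, ← Real.rpow_natCast, ← Real.rpow_mul (by positivity)]
  simp only [trace, diag, mul_apply, conjTranspose_apply, Complex.re_sum, RCLike.star_def,
    RCLike.conj_mul]
  rw [Finset.sum_comm]
  norm_num [← Complex.ofReal_pow]

lemma IsHermitian.purity_eq_frobenius_norm_sq {m : Type*} [Fintype m] {A : Matrix m m ℂ}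
    (hA : A.IsHermitian) : purity A = ‖A‖ ^ 2 := by
  rw [frobenius_norm_sq_eq_re_trace_conjTranspose_mul_self, hA.eq, purity]

lemma PosSemidef.frobenius_norm_le_re_trace {m : Type*} [Fintype m] {S : Matrix m m ℂ}
    (hS : S.PosSemidef) : ‖S‖ ≤ S.trace.re := by
  classical
  obtain ⟨B, rfl⟩ : ∃ B : Matrix m m ℂ, S = Bᴴ * B := by
    open scoped MatrixOrder in exact CStarAlgebra.nonneg_iff_eq_star_mul_self.mp hS.nonneg
  calc ‖Bᴴ * B‖ ≤ ‖Bᴴ‖ * ‖B‖ := frobenius_norm_mul _ _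
    _ = (Bᴴ * B).trace.re := by
      rw [frobenius_norm_conjTranspose, ← sq, frobenius_norm_sq_eq_re_trace_conjTranspose_mul_self]

open scoped MatrixOrder in
lemma frobenius_norm_le_traceNorm {m : Type*} [Fintype m] [DecidableEq m] (A : Matrix m m ℂ) :
    ‖A‖ ≤ traceNorm A := by
  have hA := (posSemidef_conjTranspose_mul_self A).nonneg
  rw [traceNorm, ← IsHermitian.cfc_eq, ← cfcₙ_eq_cfc, ← CFC.sqrt_eq_real_sqrt _ hA]
  have hS := nonneg_iff_posSemidef.mp (CFC.sqrt_nonneg (Aᴴ * A))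
  have hSS : (CFC.sqrt (Aᴴ * A))ᴴ * CFC.sqrt (Aᴴ * A) = Aᴴ * A := by
    rw [hS.1.eq, CFC.sqrt_mul_sqrt_self _ hA]
  calc ‖A‖ = ‖CFC.sqrt (Aᴴ * A)‖ := by
        rw [← sq_eq_sq₀ (norm_nonneg _) (norm_nonneg _),
          frobenius_norm_sq_eq_re_trace_conjTranspose_mul_self,
          frobenius_norm_sq_eq_re_trace_conjTranspose_mul_self, hSS]
    _ ≤ _ := hS.frobenius_norm_le_re_trace

end Matrix

lemma pauli1_sum_mul_pauli1 (i j k l : Fin 2) :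
    ∑ c, pauli1 c i j * pauli1 c k l = if i = l ∧ j = k then 2 else 0 := by
  fin_cases i <;> fin_cases j <;> fin_cases k <;> fin_cases l <;>
    simp [pauli1, Fin.sum_univ_four] <;> norm_num

lemma sum_pauliOp_mul_pauliOp {n : ℕ} (z z' w w' : Fin n → Fin 2) :
    ∑ a, PauliOp a z z' * PauliOp a w w' = if z = w' ∧ z' = w then 2 ^ n else 0 := by
  simp only [PauliOp, of_apply, ← Finset.prod_mul_distrib]
  rw [← Fintype.prod_sum (fun i c => pauli1 c (z i) (z' i) * pauli1 c (w i) (w' i))]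
  simp only [pauli1_sum_mul_pauli1, Finset.prod_ite_zero, Finset.prod_const, Finset.card_univ,
    Fintype.card_fin, Finset.mem_univ, forall_const, funext_iff, forall_and]

lemma sum_trace_pauliOp_mul_smul_pauliOp {n : ℕ} (M : Matrix (Fin n → Fin 2) (Fin n → Fin 2) ℂ) :
    ∑ a, (PauliOp a * M).trace • PauliOp a = (2 ^ n : ℂ) • M := by
  ext w w'
  simp only [Matrix.sum_apply, Matrix.smul_apply, trace, diag, mul_apply, smul_eq_mul,
    Finset.sum_mul]
  rw [Finset.sum_comm]
  simp_rw [Finset.sum_comm (γ := Fin n → Fin 4)]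
  simp only [mul_right_comm _ (M _ _), ← Finset.sum_mul, sum_pauliOp_mul_pauliOp]
  simp [ite_and]

lemma sum_trace_pauliOp_mul_mul_trace_pauliOp_mul {n : ℕ}
    (M N : Matrix (Fin n → Fin 2) (Fin n → Fin 2) ℂ) :
    ∑ a, (PauliOp a * M).trace * (PauliOp a * N).trace = 2 ^ n * (M * N).trace := by
  calc ∑ a, (PauliOp a * M).trace * (PauliOp a * N).trace
      = ((∑ a, (PauliOp a * M).trace • PauliOp a) * N).trace := by
        simp only [Finset.sum_mul, trace_sum, smul_mul_assoc, trace_smul, smul_eq_mul]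
    _ = 2 ^ n * (M * N).trace := by
        rw [sum_trace_pauliOp_mul_smul_pauliOp, smul_mul_assoc, trace_smul, smul_eq_mul]

lemma pauli1_conjTranspose (c : Fin 4) : (pauli1 c)ᴴ = pauli1 c := by
  fin_cases c <;> ext i j <;> fin_cases i <;> fin_cases j <;> simp [pauli1]

lemma pauliOp_isHermitian {n : ℕ} (a : Fin n → Fin 4) : (PauliOp a).IsHermitian := by
  ext z z'
  simp only [PauliOp, conjTranspose_apply, of_apply, star_prod]
  congr! 1 with i
  rw [← conjTranspose_apply, pauli1_conjTranspose]

lemma ofReal_pExp {n : ℕ} {A : Matrix (Fin n → Fin 2) (Fin n → Fin 2) ℂ} (hA : A.IsHermitian)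
    (a : Fin n → Fin 4) : (pExp A a : ℂ) = (PauliOp a * A).trace := by
  refine Complex.conj_eq_iff_re.mp ?_
  rw [← Complex.star_def, ← trace_conjTranspose, conjTranspose_mul, hA.eq,
    (pauliOp_isHermitian a).eq, trace_mul_comm]

lemma sum_pExp_sq {n : ℕ} {A : Matrix (Fin n → Fin 2) (Fin n → Fin 2) ℂ} (hA : A.IsHermitian) :
    ∑ a, pExp A a ^ 2 = 2 ^ n * purity A := by
  have h := congrArg Complex.re (sum_trace_pauliOp_mul_mul_trace_pauliOp_mul A A)
  simp only [← ofReal_pExp hA, ← sq, ← Complex.ofReal_pow, ← Complex.ofReal_sum,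
    Complex.ofReal_re] at h
  rw [h, ← Complex.ofReal_ofNat, ← Complex.ofReal_pow, Complex.re_ofReal_mul, purity, sq]

lemma pExp_add {n : ℕ} (A B : Matrix (Fin n → Fin 2) (Fin n → Fin 2) ℂ) (a : Fin n → Fin 4) :
    pExp (A + B) a = pExp A a + pExp B a := by
  simp [pExp, mul_add]

lemma pExp_sub {n : ℕ} (A B : Matrix (Fin n → Fin 2) (Fin n → Fin 2) ℂ) (a : Fin n → Fin 4) :
    pExp (A - B) a = pExp A a - pExp B a := by
  simp [pExp, mul_sub]

lemma sqrt_sum_pExp_sq {n : ℕ} {A : Matrix (Fin n → Fin 2) (Fin n → Fin 2) ℂ}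
    (hA : A.IsHermitian) : √(∑ a, pExp A a ^ 2) = √(2 ^ n) * ‖A‖ := by
  rw [sum_pExp_sq hA, hA.purity_eq_frobenius_norm_sq, Real.sqrt_mul (by positivity),
    Real.sqrt_sq (norm_nonneg _)]

lemma cdf_eq_div {n : ℕ} {σ : Matrix (Fin n → Fin 2) (Fin n → Fin 2) ℂ} (hσ : σ.IsHermitian)
    (δ : ℝ) :
    cdf σ δ = (∑ a, if pExp σ a ^ 2 ≤ δ then pExp σ a ^ 2 else 0) / ∑ a, pExp σ a ^ 2 := by
  rw [sum_pExp_sq hσ, Finset.sum_div]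
  simp only [cdf, pDist, ite_div, zero_div]

namespace IsState

variable {m : Type*} [Fintype m] {ρ : Matrix m m ℂ}

lemma frobenius_norm_le_one (hρ : IsState ρ) : ‖ρ‖ ≤ 1 := by
  simpa [hρ.trace_one] using hρ.posSemidef.frobenius_norm_le_re_trace

lemma purity_pos (hρ : IsState ρ) : 0 < purity ρ := by
  have hρ0 : ρ ≠ 0 := by
    rintro rfl
    simpa using hρ.trace_one
  rw [hρ.posSemidef.1.purity_eq_frobenius_norm_sq]
  exact pow_pos (norm_pos_iff.mpr hρ0) 2

lemma sum_pExp_sq_pos {n : ℕ} {ρ : Matrix (Fin n → Fin 2) (Fin n → Fin 2) ℂ} (hρ : IsState ρ) :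
    0 < ∑ a, pExp ρ a ^ 2 := by
  rw [sum_pExp_sq hρ.posSemidef.1]
  exact mul_pos (by positivity) hρ.purity_pos

end IsState

lemma sum_abs_sq_pExp_sub_sq_pExp_le {n : ℕ} {ρ ρ' : Matrix (Fin n → Fin 2) (Fin n → Fin 2) ℂ}
    (hρ : IsState ρ) (hρ' : IsState ρ') :
    ∑ a, |pExp ρ a ^ 2 - pExp ρ' a ^ 2| ≤ 2 ^ n * (2 * traceNorm (ρ - ρ')) := by
  have hρh := hρ.posSemidef.1
  have hρ'h := hρ'.posSemidef.1
  have hsum : ‖ρ + ρ'‖ ≤ 2 := by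
    linarith [norm_add_le ρ ρ', hρ.frobenius_norm_le_one, hρ'.frobenius_norm_le_one]
  calc ∑ a, |pExp ρ a ^ 2 - pExp ρ' a ^ 2|
      ≤ √(∑ a, pExp (ρ - ρ') a ^ 2) * √(∑ a, pExp (ρ + ρ') a ^ 2) := by
        simpa only [pExp_sub, pExp_add] using sum_abs_sq_sub_sq_le _ (pExp ρ) (pExp ρ')
    _ = 2 ^ n * (‖ρ - ρ'‖ * ‖ρ + ρ'‖) := by
        rw [sqrt_sum_pExp_sq (hρh.sub hρ'h), sqrt_sum_pExp_sq (hρh.add hρ'h)]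
        have := Real.mul_self_sqrt (show (0 : ℝ) ≤ 2 ^ n by positivity)
        linear_combination ‖ρ - ρ'‖ * ‖ρ + ρ'‖ * this
    _ ≤ 2 ^ n * (traceNorm (ρ - ρ') * 2) := by
        gcongr
        · exact (norm_nonneg (ρ - ρ')).trans (Matrix.frobenius_norm_le_traceNorm _)
        · exact Matrix.frobenius_norm_le_traceNorm _
    _ = 2 ^ n * (2 * traceNorm (ρ - ρ')) := by ring

theorem stmt_5_general {n : ℕ}
    (ρ ρ' : Matrix (Fin n → Fin 2) (Fin n → Fin 2) ℂ)
    (hρ : IsState ρ) (hρ' : IsState ρ') :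
    ∀ ε : ℝ, 0 ≤ ε →
      cdf ρ' ε ≤ cdf ρ (2 * ε) + 4 * traceNorm (ρ - ρ') / purity ρ' := by
  intro ε _
  have hshift : 2 * (∑ a, |pExp ρ a ^ 2 - pExp ρ' a ^ 2|) / ∑ a, pExp ρ' a ^ 2 ≤
      4 * traceNorm (ρ - ρ') / purity ρ' := by
    have hτ' := hρ'.purity_pos
    calc _ ≤ 2 * (2 ^ n * (2 * traceNorm (ρ - ρ'))) / (2 ^ n * purity ρ') := by
          rw [sum_pExp_sq hρ'.posSemidef.1]
          gcongr
          exact sum_abs_sq_pExp_sub_sq_pExp_le hρ hρ'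
      _ = 4 * traceNorm (ρ - ρ') / purity ρ' := by field_simp; ring
  rw [cdf_eq_div hρ'.posSemidef.1, cdf_eq_div hρ.posSemidef.1]
  exact (sum_ite_sq_div_le _ _ ε hρ'.sum_pExp_sq_pos hρ.sum_pExp_sq_pos).trans
    (add_le_add_right hshift _)

/-- For `n`-qubit states `ρ, ρ'` and any `ε ≥ 0`,
`F_{ρ'}(ε) ≤ F_ρ(2ε) + 4‖ρ − ρ'‖₁ / tr(ρ'²)`. -/
theorem stmt_5 {n : ℕ} (hn : 1 ≤ n)
    (ρ ρ' : Matrix (Fin n → Fin 2) (Fin n → Fin 2) ℂ)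
    (hρ : IsState ρ) (hρ' : IsState ρ') :
    ∀ ε : ℝ, 0 ≤ ε →
      cdf ρ' ε ≤ cdf ρ (2 * ε) + 4 * traceNorm (ρ - ρ') / purity ρ' :=
  stmt_5_general ρ ρ' hρ hρ'
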